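/- Suppose the probability measure P satisfies (1/2, b)-multiplicative expansion on X with 1 < b < 2. Then every measurable S ⊆ X with P(S ∩ Q_i) ≤ P(Q_i)/2 for all i satisfies P(N*(S) \ S) ≥ (b − 1)·P(S). -/

import Mathlib

open MeasureTheory Set

/-- `P` satisfies `(1/2, b)`-multiplicative expansion w.r.t. the class partition `Q` and the
neighborhood operation `Nbhd` on sets: for every class `i` and every measurable `S` with
`P_i(S) ≤ 1/2` one has `P_i(Nbhd S) ≥ min (b * P_i S) 1`, where `P_i(T) = P(T ∩ Q i)/P(Q i)`. -/
def MultiplicativeExpansion {X : Type*} [MeasurableSpace X] (P : Measure X)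
    {K : ℕ} (Q : Fin K → Set X) (Nbhd : Set X → Set X) (b : ℝ) : Prop :=
  ∀ i : Fin K, ∀ S : Set X, MeasurableSet S →
    (P (S ∩ Q i)).toReal / (P (Q i)).toReal ≤ 1 / 2 →
    (P (Nbhd S ∩ Q i)).toReal / (P (Q i)).toReal ≥
      min (b * ((P (S ∩ Q i)).toReal / (P (Q i)).toReal)) 1

/-! Inside a class `Q i`, the set `S ∩ Q i` has relative mass at most `1/2` and `b < 2`, so the
minimum in the expansion hypothesis is attained by `b · P_i(S)`: the neighbourhood of `S ∩ Q i`
inside `Q i` has mass at least `b · P(S ∩ Q i)`, of which at least `(b - 1) · P(S ∩ Q i)` lies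
in `(N*(S) \ S) ∩ Q i`. The classes partition `X`, so summing over them gives the bound. -/

section

variable {X : Type*} [MeasurableSpace X]

theorem measureReal_eq_sum_inter_preimage_singleton {ι : Type*} [Fintype ι] [MeasurableSpace ι]
    [MeasurableSingletonClass ι] {f : X → ι} (hf : Measurable f) (μ : Measure X)
    [IsFiniteMeasure μ] (T : Set X) : μ.real T = ∑ i, μ.real (T ∩ f ⁻¹' {i}) := by
  have hfiber : ∀ i, MeasurableSet (f ⁻¹' {i}) := fun i => hf (measurableSet_singleton i)
  have hdisj : Pairwise (Function.onFun Disjoint fun i => f ⁻¹' {i}) := fun i j hij =>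
    (disjoint_singleton.2 hij).preimage f
  have hcover : ⋃ i, f ⁻¹' {i} = univ := iUnion_eq_univ_iff.2 fun x => ⟨f x, rfl⟩
  have h : μ T = ∑ i, μ (T ∩ f ⁻¹' {i}) := by
    calc μ T = μ.restrict (⋃ i, f ⁻¹' {i}) T := by rw [hcover, Measure.restrict_univ]
      _ = ∑ i, μ (T ∩ f ⁻¹' {i}) := by
        rw [Measure.restrict_iUnion hdisj hfiber, Measure.sum_apply_of_countable, tsum_fintype]
        simp only [Measure.restrict_apply' (hfiber _)]
  simp only [measureReal_def, h, ENNReal.toReal_sum fun i _ => measure_ne_top μ _]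

theorem MultiplicativeExpansion.mul_measureReal_le {P : Measure X} {K : ℕ} {Q : Fin K → Set X}
    {Nbhd : Set X → Set X} {b : ℝ} (hexp : MultiplicativeExpansion P Q Nbhd b) (hb : b ≤ 2)
    {i : Fin K} {T : Set X} (hTQ : T ⊆ Q i) (hT : MeasurableSet T)
    (hhalf : P.real T ≤ P.real (Q i) / 2) : b * P.real T ≤ P.real (Nbhd T ∩ Q i) := by
  -- If `P (Q i) = 0` the hypothesis only says `0 ≥ min 0 1` (division by zero), but then `P T = 0`.
  rcases (measureReal_nonneg : 0 ≤ P.real (Q i)).eq_or_lt with hQ0 | hQpos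
  · have hT0 : P.real T = 0 := le_antisymm (by linarith) measureReal_nonneg
    rw [hT0, mul_zero]
    exact measureReal_nonneg
  have hratio : P.real T / P.real (Q i) ≤ 1 / 2 := by
    rw [div_le_iff₀ hQpos]
    linarith
  have h := hexp i T hT
  simp only [← measureReal_def, inter_eq_left.2 hTQ] at h
  specialize h hratio
  have hr : 0 ≤ P.real T / P.real (Q i) := div_nonneg measureReal_nonneg hQpos.le
  rw [min_eq_left (by nlinarith [mul_nonneg (sub_nonneg.2 hb) hr]), ge_iff_le,
    le_div_iff₀ hQpos, mul_assoc, div_mul_cancel₀ _ hQpos.ne'] at h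
  exact h

end

theorem constant_expansion_of_multiplicative_b_lt_two_general
    {X : Type*} [MeasurableSpace X] (P : Measure X) [IsProbabilityMeasure P]
    (K : ℕ)
    (Gstar : X → Fin K) (hGstar : Measurable Gstar)
    (Q : Fin K → Set X) (hQ : ∀ i, Q i = {x | Gstar x = i})
    (Nbhd : Set X → Set X)
    (Nstar : Set X → Set X)
    (hNstar : ∀ S : Set X, Nstar S = ⋃ i : Fin K, (Nbhd (S ∩ Q i) ∩ Q i))
    (b : ℝ) (hb2 : b < 2)
    (hexp : MultiplicativeExpansion P Q Nbhd b)
    (S : Set X) (hS : MeasurableSet S)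
    (hhalf : ∀ i : Fin K, (P (S ∩ Q i)).toReal ≤ (P (Q i)).toReal / 2) :
    (P (Nstar S \ S)).toReal ≥ (b - 1) * (P S).toReal := by
  have hsplit : ∀ T, P.real T = ∑ i, P.real (T ∩ Q i) := by
    have hfiber : ∀ i, Gstar ⁻¹' {i} = Q i := fun i => (hQ i).symm
    simpa only [hfiber] using measureReal_eq_sum_inter_preimage_singleton hGstar P
  have hclass : ∀ i, (b - 1) * P.real (S ∩ Q i) ≤ P.real ((Nstar S \ S) ∩ Q i) := by
    intro i
    have hQi : MeasurableSet (Q i) := hQ i ▸ hGstar (measurableSet_singleton i)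
    have hgrow := hexp.mul_measureReal_le hb2.le inter_subset_right (hS.inter hQi) (hhalf i)
    have hsub : (Nbhd (S ∩ Q i) ∩ Q i) \ (S ∩ Q i) ⊆ (Nstar S \ S) ∩ Q i :=
      fun x ⟨hxA, hxS⟩ => ⟨⟨hNstar S ▸ mem_iUnion_of_mem i hxA, fun h => hxS ⟨h, hxA.2⟩⟩, hxA.2⟩
    calc (b - 1) * P.real (S ∩ Q i) ≤ P.real (Nbhd (S ∩ Q i) ∩ Q i) - P.real (S ∩ Q i) := by
          linarith
      _ ≤ P.real ((Nbhd (S ∩ Q i) ∩ Q i) \ (S ∩ Q i)) :=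
          le_measureReal_sdiff (measure_ne_top P _)
      _ ≤ P.real ((Nstar S \ S) ∩ Q i) := measureReal_mono hsub
  calc (b - 1) * P.real S = ∑ i, (b - 1) * P.real (S ∩ Q i) := by rw [← Finset.mul_sum, ← hsplit]
    _ ≤ ∑ i, P.real ((Nstar S \ S) ∩ Q i) := Finset.sum_le_sum fun i _ => hclass i
    _ = P.real (Nstar S \ S) := (hsplit _).symm

/-- If `P` satisfies `(1/2, b)`-multiplicative expansion with `1 < b < 2`, then every measurable
`S` with `P (S ∩ Q i) ≤ P (Q i) / 2` for all `i` satisfies `P (N*(S) \ S) ≥ P S`. -/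
theorem constant_expansion_of_multiplicative_b_lt_two
    {X : Type*} [MeasurableSpace X] (P : Measure X) [IsProbabilityMeasure P]
    (K : ℕ) (hK : 1 ≤ K)
    (Gstar : X → Fin K) (hGstar : Measurable Gstar)
    (Q : Fin K → Set X) (hQ : ∀ i, Q i = {x | Gstar x = i})
    (hQpos : ∀ i, 0 < P (Q i))
    (N : X → Set X) (hNmeas : ∀ x, MeasurableSet (N x))
    (Nbhd : Set X → Set X) (hNbhd : ∀ S : Set X, Nbhd S = ⋃ x ∈ S, N x)
    (Nstar : Set X → Set X)
    (hNstar : ∀ S : Set X, Nstar S = ⋃ i : Fin K, (Nbhd (S ∩ Q i) ∩ Q i))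
    (hNbhdMeas : ∀ S : Set X, MeasurableSet S → MeasurableSet (Nbhd S))
    (hNstarMeas : ∀ S : Set X, MeasurableSet S → MeasurableSet (Nstar S))
    (b : ℝ) (hb1 : 1 < b) (hb2 : b < 2)
    (hexp : MultiplicativeExpansion P Q Nbhd b)
    (S : Set X) (hS : MeasurableSet S)
    (hhalf : ∀ i : Fin K, (P (S ∩ Q i)).toReal ≤ (P (Q i)).toReal / 2) :
    (P (Nstar S \ S)).toReal ≥ (b - 1) * (P S).toReal :=
  constant_expansion_of_multiplicative_b_lt_two_general P K Gstar hGstar Q hQ Nbhd Nstar hNstar b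
    hb2 hexp S hS hhalf
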